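/- arXiv:2508.05760 — 6 statements merged into one kernel-verified Lean document; each statement's English description precedes it below -/
import Mathlib

section
/- Let A be an n×n non-negative matrix with all entries at most 1, and let μ be an eigenvalue of A with nonzero imaginary part. Then |μ|² ≤ (n² + n·λmax − 2·λmax²)/4, where λmax is the spectral radius (Perron eigenvalue) of A. -/
/-!
Gram–Schmidt applied to eigenvectors for the distinct eigenvalues `λmax, μ, μ̄` yields an
orthonormal triple `e₁, e₂, e₃` with `⟪eₖ, A eₖ⟫ = λₖ`, because the span of the earlier
eigenvectors is `A`-invariant and orthogonal to `eₖ`. Bessel's inequality on the rows of `A` then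
gives Schur's bound `λmax² + 2|μ|² ≤ ‖A‖_F²`. The all-ones matrix `J` is `n` times the orthogonal
projection onto the all-ones vector, so an eigenvector of `A` for `μ` shows
`min(|μ|², |μ - n|²) ≤ ‖A - J‖_F²`, where `|μ - n| ≥ n - |μ|`. Finally `a² + (1 - a)² ≤ 1` on
`[0, 1]` gives `‖A‖_F² + ‖A - J‖_F² ≤ n²`, and the bound follows by an elementary case analysis.
-/

open Matrix Polynomial InnerProductSpace Submodule WithLp

section GramSchmidt

variable {𝕜 E : Type*} [RCLike 𝕜] [NormedAddCommGroup E] [InnerProductSpace 𝕜 E]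
  {ι : Type*} [LinearOrder ι] [LocallyFiniteOrderBot ι] [WellFoundedLT ι]

lemma inner_gramSchmidtNormed_apply_of_eigenvectors (T : Module.End 𝕜 E) {μ : ι → 𝕜}
    {v : ι → E} (hv : ∀ i, T (v i) = μ i • v i) (hli : LinearIndependent 𝕜 v) (k : ι) :
    inner 𝕜 (gramSchmidtNormed 𝕜 v k) (T (gramSchmidtNormed 𝕜 v k)) = μ k := by
  set S := span 𝕜 (v '' Set.Iio k)
  set g := gramSchmidt 𝕜 v k
  set e := gramSchmidtNormed 𝕜 v k
  have he : e = (‖g‖ : 𝕜)⁻¹ • g := rfl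
  have hTS : S ≤ S.comap T := span_le.2 <| by
    rintro _ ⟨i, hi, rfl⟩
    simpa [hv i] using smul_mem S (μ i) (subset_span ⟨i, hi, rfl⟩)
  have hgv : g - v k ∈ S := by
    rw [show g = _ from gramSchmidt_def 𝕜 v k, sub_sub_cancel_left,
      show S = _ from (span_gramSchmidt_Iio 𝕜 v k).symm]
    refine neg_mem (sum_mem fun i hi => ?_)
    have hgi : gramSchmidt 𝕜 v i ∈ span 𝕜 (gramSchmidt 𝕜 v '' Set.Iio k) :=
      subset_span ⟨i, Finset.mem_Iio.1 hi, rfl⟩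
    exact (span_singleton_le_iff_mem _ _).2 hgi (starProjection_apply_mem _ _)
  have hdefect : T e - μ k • e ∈ S := by
    have : T e - μ k • e = (‖g‖ : 𝕜)⁻¹ • (T (g - v k) - μ k • (g - v k)) := by
      rw [he, map_smul, map_sub, hv]
      module
    rw [this]
    exact smul_mem _ _ (sub_mem (hTS hgv) (smul_mem _ _ hgv))
  have horth : S ≤ (𝕜 ∙ e)ᗮ := span_le.2 <| by
    rintro _ ⟨i, hi, rfl⟩
    refine mem_orthogonal_singleton_iff_inner_right.2 ?_
    rw [he, inner_smul_left, gramSchmidt_inv_triangular 𝕜 v hi, mul_zero]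
  calc inner 𝕜 e (T e) = inner 𝕜 e (μ k • e) + inner 𝕜 e (T e - μ k • e) := by
        rw [← inner_add_right, add_sub_cancel]
    _ = μ k := by
        rw [mem_orthogonal_singleton_iff_inner_right.1 (horth hdefect), inner_smul_right,
          inner_self_eq_norm_sq_to_K, gramSchmidtNormed_unit_length k hli]
        simp

end GramSchmidt

section Frobenius

variable {𝕜 : Type*} [RCLike 𝕜] {m n : Type*} [Fintype n]

lemma Matrix.norm_toLp_star_row_sq (B : Matrix m n 𝕜) (i : m) :
    ‖toLp 2 (star (B i))‖ ^ 2 = ∑ j, ‖B i j‖ ^ 2 := by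
  simp [EuclideanSpace.norm_sq_eq]

variable [DecidableEq n]

lemma Matrix.toEuclideanLin_apply_eq_inner (B : Matrix m n 𝕜) (x : EuclideanSpace 𝕜 n) (i : m) :
    toEuclideanLin B x i = inner 𝕜 (toLp 2 (star (B i))) x := by
  simp [toLpLin_apply, PiLp.inner_apply, mulVec, dotProduct, mul_comm]

variable [Fintype m]

lemma Matrix.norm_toEuclideanLin_apply_sq_le (B : Matrix m n 𝕜) (x : EuclideanSpace 𝕜 n) :
    ‖toEuclideanLin B x‖ ^ 2 ≤ (∑ i, ∑ j, ‖B i j‖ ^ 2) * ‖x‖ ^ 2 := by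
  rw [EuclideanSpace.norm_sq_eq, Finset.sum_mul]
  refine Finset.sum_le_sum fun i _ => ?_
  rw [toEuclideanLin_apply_eq_inner, ← norm_toLp_star_row_sq, ← mul_pow]
  exact pow_le_pow_left₀ (norm_nonneg _) (norm_inner_le_norm _ _) 2

-- Bessel's inequality, applied to each row of `B`.
lemma Orthonormal.sum_norm_toEuclideanLin_apply_sq_le {ι : Type*} [Fintype ι]
    {e : ι → EuclideanSpace 𝕜 n} (he : Orthonormal 𝕜 e) (B : Matrix m n 𝕜) :
    ∑ k, ‖toEuclideanLin B (e k)‖ ^ 2 ≤ ∑ i, ∑ j, ‖B i j‖ ^ 2 := by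
  simp_rw [EuclideanSpace.norm_sq_eq, toEuclideanLin_apply_eq_inner]
  rw [Finset.sum_comm]
  refine Finset.sum_le_sum fun i _ => ?_
  simp_rw [← norm_toLp_star_row_sq, norm_inner_symm]
  exact he.sum_inner_products_le _

end Frobenius

section Eigenvalues

variable {𝕜 : Type*} [RCLike 𝕜] {n : Type*} [Fintype n] [DecidableEq n]

lemma Matrix.exists_hasEigenvector_of_mem_roots_charpoly (B : Matrix n n 𝕜) {z : 𝕜}
    (hz : z ∈ B.charpoly.roots) : ∃ x, Module.End.HasEigenvector (toEuclideanLin B) z x := by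
  have hcharpoly : (toEuclideanLin B).charpoly = B.charpoly := by
    rw [toEuclideanLin_eq_toLin_orthonormal, Matrix.charpoly_toLin]
  refine Module.End.HasEigenvalue.exists_hasEigenvector ?_
  rw [Module.End.hasEigenvalue_iff_isRoot_charpoly, hcharpoly]
  exact (mem_roots'.1 hz).2

lemma Matrix.conj_mem_roots_charpoly_map_ofReal (A : Matrix n n ℝ) {z : ℂ}
    (hz : z ∈ (A.map Complex.ofReal).charpoly.roots) :
    (starRingEnd ℂ) z ∈ (A.map Complex.ofReal).charpoly.roots := by
  have hroots (w : ℂ) : w ∈ (A.map Complex.ofReal).charpoly.roots ↔ aeval w A.charpoly = 0 := by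
    rw [show A.map Complex.ofReal = A.map (algebraMap ℝ ℂ) from rfl, charpoly_map,
      mem_roots_map_of_injective (algebraMap ℝ ℂ).injective A.charpoly_monic.ne_zero, aeval_def]
  rw [hroots] at hz ⊢
  rw [← Complex.conjAe_coe, aeval_algHom_apply, hz, map_zero]

theorem Matrix.sum_norm_sq_eigenvalues_le {ι : Type*} [Fintype ι] [LinearOrder ι]
    [LocallyFiniteOrderBot ι] (B : Matrix n n 𝕜) {μ : ι → 𝕜} (hμ : Function.Injective μ)
    {v : ι → EuclideanSpace 𝕜 n}
    (hv : ∀ i, Module.End.HasEigenvector (toEuclideanLin B) (μ i) (v i)) :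
    ∑ i, ‖μ i‖ ^ 2 ≤ ∑ i, ∑ j, ‖B i j‖ ^ 2 := by
  have hli := Module.End.eigenvectors_linearIndependent' _ μ hμ v hv
  set e := gramSchmidtNormed 𝕜 v
  have he : Orthonormal 𝕜 e := gramSchmidtNormed_orthonormal hli
  calc ∑ i, ‖μ i‖ ^ 2
      = ∑ i, ‖inner 𝕜 (e i) (toEuclideanLin B (e i))‖ ^ 2 := by
        simp_rw [e, inner_gramSchmidtNormed_apply_of_eigenvectors _
          (fun i => (hv i).apply_eq_smul) hli]
    _ ≤ ∑ i, ‖toEuclideanLin B (e i)‖ ^ 2 := by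
        refine Finset.sum_le_sum fun i _ => pow_le_pow_left₀ (norm_nonneg _) ?_ 2
        simpa [he.1 i] using norm_inner_le_norm (𝕜 := 𝕜) (e i) (toEuclideanLin B (e i))
    _ ≤ ∑ i, ∑ j, ‖B i j‖ ^ 2 := he.sum_norm_toEuclideanLin_apply_sq_le B

end Eigenvalues

section AllOnes

lemma min_mul_norm_sq_le_norm_smul_sub_smul_starProjection {𝕜 E : Type*} [RCLike 𝕜]
    [NormedAddCommGroup E] [InnerProductSpace 𝕜 E] (K : Submodule 𝕜 E)
    [K.HasOrthogonalProjection] (μ c : 𝕜) (x : E) :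
    min (‖μ‖ ^ 2) (‖μ - c‖ ^ 2) * ‖x‖ ^ 2 ≤ ‖μ • x - c • K.starProjection x‖ ^ 2 := by
  set p := K.starProjection x
  have hp : inner 𝕜 (x - p) p = 0 :=
    starProjection_inner_eq_zero x p (starProjection_apply_mem K x)
  have hx : ‖x‖ ^ 2 = ‖x - p‖ ^ 2 + ‖p‖ ^ 2 := by
    simpa [sq] using norm_add_sq_eq_norm_sq_add_norm_sq_of_inner_eq_zero (x - p) p hp
  have hy : ‖μ • x - c • p‖ ^ 2 = ‖μ‖ ^ 2 * ‖x - p‖ ^ 2 + ‖μ - c‖ ^ 2 * ‖p‖ ^ 2 := by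
    have hsplit : μ • x - c • p = μ • (x - p) + (μ - c) • p := by
      rw [smul_sub, sub_smul]; abel
    have := norm_add_sq_eq_norm_sq_add_norm_sq_of_inner_eq_zero (μ • (x - p)) ((μ - c) • p)
      (by rw [inner_smul_left, inner_smul_right, hp, mul_zero, mul_zero])
    rw [hsplit, sq, this, norm_smul, norm_smul]
    ring
  rw [hx, hy, mul_add]
  gcongr
  · exact min_le_left _ _
  · exact min_le_right _ _

variable {𝕜 : Type*} [RCLike 𝕜] {n : Type*} [Fintype n] [DecidableEq n]

lemma Matrix.toEuclideanLin_of_one_apply (x : EuclideanSpace 𝕜 n) :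
    toEuclideanLin (of fun _ _ => (1 : 𝕜)) x =
      (Fintype.card n : 𝕜) • (𝕜 ∙ toLp 2 (fun _ => (1 : 𝕜))).starProjection x := by
  ext i
  have : Nonempty n := ⟨i⟩
  have hn : (Fintype.card n : 𝕜) ≠ 0 := Nat.cast_ne_zero.2 Fintype.card_ne_zero
  have hone : ‖toLp 2 (fun _ : n => (1 : 𝕜))‖ ^ 2 = Fintype.card n := by
    simp [EuclideanSpace.norm_sq_eq]
  rw [starProjection_singleton, hone]
  simp only [toLpLin_apply, mulVec, dotProduct, of_apply, one_mul, PiLp.inner_apply,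
    RCLike.inner_apply, map_one, mul_one, map_natCast, PiLp.smul_apply, smul_eq_mul]
  field_simp

-- Bauer–Fike for the all-ones matrix, whose eigenvalues are `card n` and `0`.
lemma Matrix.min_norm_sq_le_sum_norm_sub_one_sq (B : Matrix n n 𝕜) {μ : 𝕜}
    {x : EuclideanSpace 𝕜 n} (hx : Module.End.HasEigenvector (toEuclideanLin B) μ x) :
    min (‖μ‖ ^ 2) (‖μ - Fintype.card n‖ ^ 2) ≤ ∑ i, ∑ j, ‖B i j - 1‖ ^ 2 := by
  set E : Matrix n n 𝕜 := B - of fun _ _ => 1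
  have hEx : toEuclideanLin E x = μ • x -
      (Fintype.card n : 𝕜) • (𝕜 ∙ toLp 2 (fun _ : n => (1 : 𝕜))).starProjection x := by
    rw [map_sub, LinearMap.sub_apply, hx.apply_eq_smul, toEuclideanLin_of_one_apply]
  refine le_of_mul_le_mul_right ?_ (pow_pos (norm_pos_iff.2 hx.2) 2)
  calc min (‖μ‖ ^ 2) (‖μ - Fintype.card n‖ ^ 2) * ‖x‖ ^ 2
      ≤ ‖toEuclideanLin E x‖ ^ 2 := by
        rw [hEx]
        exact min_mul_norm_sq_le_norm_smul_sub_smul_starProjection _ _ _ _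
    _ ≤ (∑ i, ∑ j, ‖E i j‖ ^ 2) * ‖x‖ ^ 2 := norm_toEuclideanLin_apply_sq_le E x
    _ = (∑ i, ∑ j, ‖B i j - 1‖ ^ 2) * ‖x‖ ^ 2 := rfl

end AllOnes

lemma Complex.injective_ofReal_self_conj (l : ℝ) {μ : ℂ} (him : μ.im ≠ 0) :
    Function.Injective ![(l : ℂ), μ, (starRingEnd ℂ) μ] := by
  have h1 : μ ≠ l := fun h => him (by rw [h, Complex.ofReal_im])
  have h2 : (starRingEnd ℂ) μ ≠ μ := fun h => him (Complex.conj_eq_iff_im.1 h)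
  have h3 : (starRingEnd ℂ) μ ≠ l := fun h => him (by simpa using congrArg Complex.im h)
  intro i j hij
  fin_cases i <;> fin_cases j <;> simp_all [eq_comm]

lemma Matrix.sum_norm_sq_add_sum_norm_sub_one_sq_le {n : Type*} [Fintype n] (A : Matrix n n ℝ)
    (hA : ∀ i j, 0 ≤ A i j ∧ A i j ≤ 1) :
    ∑ i, ∑ j, ‖A.map Complex.ofReal i j‖ ^ 2 + ∑ i, ∑ j, ‖A.map Complex.ofReal i j - 1‖ ^ 2 ≤
      (Fintype.card n : ℝ) ^ 2 := by
  calc ∑ i, ∑ j, ‖A.map Complex.ofReal i j‖ ^ 2 + ∑ i, ∑ j, ‖A.map Complex.ofReal i j - 1‖ ^ 2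
      = ∑ i, ∑ j, (A i j ^ 2 + (A i j - 1) ^ 2) := by
        simp only [← Finset.sum_add_distrib, map_apply, ← Complex.ofReal_one,
          ← Complex.ofReal_sub, Complex.norm_real, Real.norm_eq_abs, sq_abs]
    _ ≤ ∑ _i : n, ∑ _j : n, (1 : ℝ) :=
        Finset.sum_le_sum fun i _ => Finset.sum_le_sum fun j _ => by
          nlinarith [(hA i j).1, (hA i j).2]
    _ = (Fintype.card n : ℝ) ^ 2 := by simp [sq]

lemma four_mul_sq_le_of_sq_add_two_mul_sq_add_min_le {r l N d : ℝ} (hr : 0 ≤ r) (hrl : r ≤ l)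
    (hN : 0 ≤ N) (hd : (N - r) ^ 2 ≤ d) (h : l ^ 2 + 2 * r ^ 2 + min (r ^ 2) d ≤ N ^ 2) :
    4 * r ^ 2 ≤ N ^ 2 + N * l - 2 * l ^ 2 := by
  rcases le_total (r ^ 2) d with hm | hm
  · rw [min_eq_left hm] at h
    have hlN : l ≤ N := by nlinarith
    rcases le_total (2 * l) N with hc | hc
    · nlinarith [mul_nonneg (sub_nonneg.2 hc) (by linarith : 0 ≤ N + 3 * l)]
    · nlinarith [mul_nonneg (sub_nonneg.2 hlN) (sub_nonneg.2 hc)]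
  · rw [min_eq_right hm] at h
    have h2r : 2 * r ≤ N := by nlinarith
    nlinarith [mul_nonneg hN (sub_nonneg.2 hrl),
      mul_nonneg (by linarith : 0 ≤ N - r) (sub_nonneg.2 h2r)]

theorem modulus_bound (n : ℕ) (A : Matrix (Fin n) (Fin n) ℝ)
    (hA : ∀ i j, 0 ≤ A i j ∧ A i j ≤ 1)
    (lmax : ℝ)
    (hl : ((lmax : ℂ)) ∈ ((A.map Complex.ofReal).charpoly).roots)
    (hlmax : ∀ z ∈ ((A.map Complex.ofReal).charpoly).roots, ‖z‖ ≤ lmax)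
    (μ : ℂ) (hμ : μ ∈ ((A.map Complex.ofReal).charpoly).roots) (him : μ.im ≠ 0) :
    ‖μ‖ ^ 2 ≤ (n ^ 2 + n * lmax - 2 * lmax ^ 2) / 4 := by
  set B := A.map Complex.ofReal
  obtain ⟨y, hy⟩ := B.exists_hasEigenvector_of_mem_roots_charpoly hl
  obtain ⟨x, hx⟩ := B.exists_hasEigenvector_of_mem_roots_charpoly hμ
  obtain ⟨x', hx'⟩ :=
    B.exists_hasEigenvector_of_mem_roots_charpoly (A.conj_mem_roots_charpoly_map_ofReal hμ)
  have hschur := B.sum_norm_sq_eigenvalues_le (Complex.injective_ofReal_self_conj lmax him)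
    (v := ![y, x, x']) (by intro i; fin_cases i <;> assumption)
  simp only [Fin.sum_univ_three, cons_val_zero, cons_val_one, cons_val, Complex.norm_real,
    Real.norm_eq_abs, sq_abs, RCLike.norm_conj] at hschur
  have hbf := B.min_norm_sq_le_sum_norm_sub_one_sq hx
  have hentries := A.sum_norm_sq_add_sum_norm_sub_one_sq_le hA
  rw [Fintype.card_fin] at hbf hentries
  have htri : ((n : ℝ) - ‖μ‖) ^ 2 ≤ ‖μ - n‖ ^ 2 := by
    have := abs_norm_sub_norm_le (n : ℂ) μ
    rw [Complex.norm_natCast, norm_sub_rev] at this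
    simpa [sq_abs] using pow_le_pow_left₀ (abs_nonneg _) this 2
  rw [le_div_iff₀' four_pos]
  exact four_mul_sq_le_of_sq_add_two_mul_sq_add_min_le (norm_nonneg μ) (hlmax μ hμ)
    n.cast_nonneg htri (by linarith)
end

section
/- Let A be an n×n non-negative matrix with all entries at most 1. Any eigenvalue μ of A with nonzero imaginary part satisfies |μ| ≤ n/2. -/
/-!
Let `v` be an eigenvector for `μ` and `h u = ∑ i, max (Re (u v i)) 0` (`posReSum`) for `u : ℂ`.
Since the entries of `A` lie in `[0, 1]`, `Re (w μ v i) ≤ h w` for every `w`; applied with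
`w = u conj μ` at the `κ u` indices (`posReCount`) where `Re (u v i) > 0`, this gives
`|μ|² h u ≤ κ u · h (u conj μ)`. Multiplying with the same bound at `-u` and using
`κ u + κ (-u) ≤ n`, the function `G u = h u · h (-u)`, homogeneous of degree 2, satisfies
`|μ|⁴ G u ≤ (n² / 4) G (u conj μ)`. Evaluating at a maximiser of `G` on the unit circle yields
`|μ|² ≤ n² / 4`, as long as `G ≠ 0`. This is where `Im μ ≠ 0` enters: it forces two coordinates
of `v` to be `ℝ`-independent, and a suitable `u` then gives them real parts of opposite signs.
-/

open Matrix Polynomial Finset ComplexConjugate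

theorem Matrix.exists_mulVec_eq_smul_of_mem_roots_charpoly {n K : Type*} [Fintype n]
    [DecidableEq n] [Field K] {M : Matrix n n K} {μ : K} (hμ : μ ∈ M.charpoly.roots) :
    ∃ v ≠ 0, M *ᵥ v = μ • v := by
  have hdet : (scalar n μ - M).det = 0 := by
    rw [← eval_charpoly]
    exact (mem_roots'.mp hμ).2
  obtain ⟨v, hv0, hv⟩ := exists_mulVec_eq_zero_iff.mpr hdet
  rw [sub_mulVec, sub_eq_zero, scalar_apply, diagonal_const_mulVec] at hv
  exact ⟨v, hv0, hv.symm⟩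

theorem exists_norm_eq_one_forall_le_norm_sq_mul {E : Type*} [NormedAddCommGroup E]
    [NormedSpace ℝ E] [ProperSpace E] [Nontrivial E] {G : E → ℝ} (hG : Continuous G)
    (hhom : ∀ r : ℝ, 0 ≤ r → ∀ u, G (r • u) = r ^ 2 * G u) :
    ∃ u₀, ‖u₀‖ = 1 ∧ ∀ u, G u ≤ ‖u‖ ^ 2 * G u₀ := by
  obtain ⟨u₀, hu₀, hmax⟩ := (isCompact_sphere (0 : E) 1).exists_isMaxOn
    (NormedSpace.sphere_nonempty.mpr zero_le_one) hG.continuousOn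
  refine ⟨u₀, mem_sphere_zero_iff_norm.mp hu₀, fun u => ?_⟩
  rcases eq_or_ne u 0 with rfl | hu
  · simpa using (hhom 0 le_rfl 0).le
  have hunit : ‖u‖⁻¹ • u ∈ Metric.sphere (0 : E) 1 := by
    simp [norm_smul, hu]
  calc G u = ‖u‖ ^ 2 * G (‖u‖⁻¹ • u) := by
        rw [← hhom _ (norm_nonneg u), smul_inv_smul₀ (norm_ne_zero_iff.mpr hu)]
    _ ≤ ‖u‖ ^ 2 * G u₀ := by gcongr; exact hmax hunit

theorem le_mul_norm_sq_of_forall_mul_le_mul {G : ℂ → ℝ} (hG : Continuous G)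
    (hhom : ∀ r : ℝ, 0 ≤ r → ∀ u, G (r • u) = r ^ 2 * G u) (hpos : ∃ u, 0 < G u)
    {c d : ℝ} (hd : 0 ≤ d) {z : ℂ} (h : ∀ u, c * G u ≤ d * G (u * z)) :
    c ≤ d * ‖z‖ ^ 2 := by
  obtain ⟨u₀, hu₀, hle⟩ := exists_norm_eq_one_forall_le_norm_sq_mul hG hhom
  obtain ⟨u₁, hu₁⟩ := hpos
  have hGu₀ : 0 < G u₀ := pos_of_mul_pos_right (hu₁.trans_le (hle u₁)) (sq_nonneg _)
  refine le_of_mul_le_mul_right ?_ hGu₀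
  calc c * G u₀ ≤ d * G (u₀ * z) := h u₀
    _ ≤ d * (‖z‖ ^ 2 * G u₀) := by gcongr; simpa [norm_mul, hu₀] using hle (u₀ * z)
    _ = d * ‖z‖ ^ 2 * G u₀ := by ring

theorem exists_re_mul_pos_re_mul_neg {a b : ℂ} (h : (conj a * b).im ≠ 0) :
    ∃ u : ℂ, 0 < (u * a).re ∧ (u * b).re < 0 := by
  have ha : a ≠ 0 := by rintro rfl; simp at h
  have hre (t : ℝ) (z : ℂ) : ((1 + Complex.I * t) * z).re = z.re - t * z.im := by
    simp [Complex.mul_re]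
  -- `u = (1 + i t) conj a` with `t` chosen so that `Re (u b) = -1`
  refine ⟨(1 + Complex.I * ↑(((conj a * b).re + 1) / (conj a * b).im)) * conj a, ?_, ?_⟩
  · rw [mul_assoc, ← Complex.normSq_eq_conj_mul_self, hre]
    simpa using Complex.normSq_pos.mpr ha
  · rw [mul_assoc, hre, div_mul_cancel₀ _ h]
    linarith

section PosRe

variable {ι : Type*} [Fintype ι] (v : ι → ℂ)

noncomputable def posReSum (u : ℂ) : ℝ := ∑ i, max (u * v i).re 0

noncomputable def posReCount (u : ℂ) : ℕ := #{i | 0 < (u * v i).re}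

theorem posReSum_nonneg (u : ℂ) : 0 ≤ posReSum v u :=
  sum_nonneg fun _ _ => le_max_right _ _

theorem re_le_posReSum (u : ℂ) (i : ι) : (u * v i).re ≤ posReSum v u :=
  (le_max_left _ _).trans <|
    single_le_sum (f := fun i => max (u * v i).re 0) (fun _ _ => le_max_right _ _) (mem_univ i)

theorem posReSum_smul {r : ℝ} (hr : 0 ≤ r) (u : ℂ) : posReSum v (r • u) = r * posReSum v u := by
  simp only [posReSum, mul_sum, mul_max_of_nonneg _ _ hr, mul_zero, Complex.real_smul, mul_assoc,
    Complex.re_ofReal_mul]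

theorem continuous_posReSum : Continuous (posReSum v) := by
  unfold posReSum
  fun_prop

theorem posReCount_add_posReCount_neg_le (u : ℂ) :
    posReCount v u + posReCount v (-u) ≤ Fintype.card ι := by
  classical
  have hdisj :
      Disjoint ({i | 0 < (u * v i).re} : Finset ι) ({i | 0 < (-u * v i).re} : Finset ι) :=
    disjoint_filter.mpr fun i _ h h' => by simp only [neg_mul, Complex.neg_re] at h'; linarith
  rw [posReCount, posReCount, ← card_union_of_disjoint hdisj]
  exact card_le_univ _

variable {v} {A : Matrix ι ι ℝ} {μ : ℂ} (hv : A.map (↑) *ᵥ v = μ • v)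
include hv

theorem mul_apply_eq_sum_of_mulVec_eq_smul (i : ι) : μ * v i = ∑ j, (A i j : ℂ) * v j := by
  simpa [mulVec, dotProduct] using (congrFun hv i).symm

theorem exists_im_conj_mul_ne_zero (hv0 : v ≠ 0) (him : μ.im ≠ 0) :
    ∃ j k, (conj (v k) * v j).im ≠ 0 := by
  obtain ⟨k, hk⟩ := Function.ne_iff.mp hv0
  by_contra! hreal
  have hconj := congrArg (fun z => (conj (v k) * z).im) (mul_apply_eq_sum_of_mulVec_eq_smul hv k)
  simp only [mul_left_comm _ μ, ← Complex.normSq_eq_conj_mul_self, Complex.im_mul_ofReal, mul_sum,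
    Complex.im_sum, mul_left_comm _ (A k _ : ℂ), Complex.im_ofReal_mul, hreal, mul_zero,
    sum_const_zero] at hconj
  exact mul_ne_zero him (Complex.normSq_pos.mpr hk).ne' hconj

variable (hA : ∀ i j, 0 ≤ A i j ∧ A i j ≤ 1)
include hA

theorem re_mul_eigenvalue_mul_le_posReSum (w : ℂ) (i : ι) :
    (w * (μ * v i)).re ≤ posReSum v w := by
  rw [mul_apply_eq_sum_of_mulVec_eq_smul hv, mul_sum, Complex.re_sum]
  refine sum_le_sum fun j _ => ?_
  rw [mul_left_comm, Complex.re_ofReal_mul]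
  rcases le_total 0 (w * v j).re with h | h
  · exact (mul_le_of_le_one_left h (hA i j).2).trans (le_max_left _ _)
  · exact (mul_nonpos_of_nonneg_of_nonpos (hA i j).1 h).trans (le_max_right _ _)

theorem normSq_mul_posReSum_le (u : ℂ) :
    Complex.normSq μ * posReSum v u ≤ posReCount v u * posReSum v (u * conj μ) := by
  classical
  have key (i : ι) : Complex.normSq μ * (u * v i).re ≤ posReSum v (u * conj μ) := by
    have h := re_mul_eigenvalue_mul_le_posReSum hv hA (u * conj μ) i
    rwa [show u * conj μ * (μ * v i) = (Complex.normSq μ : ℂ) * (u * v i) by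
      rw [← Complex.mul_conj]; ring, Complex.re_ofReal_mul] at h
  rw [posReSum, posReCount, card_filter, Nat.cast_sum, sum_mul, mul_sum]
  refine sum_le_sum fun i _ => ?_
  split_ifs with h
  · rw [max_eq_left h.le]; simpa using key i
  · rw [max_eq_right (not_lt.mp h)]; simp

theorem normSq_sq_mul_posReSum_mul_le (u : ℂ) :
    Complex.normSq μ ^ 2 * (posReSum v u * posReSum v (-u)) ≤
      (Fintype.card ι : ℝ) ^ 2 / 4 *
        (posReSum v (u * conj μ) * posReSum v (-(u * conj μ))) := by
  have h₁ := normSq_mul_posReSum_le hv hA u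
  have h₂ := normSq_mul_posReSum_le hv hA (-u)
  rw [neg_mul] at h₂
  have hcount : (posReCount v u : ℝ) * posReCount v (-u) ≤ (Fintype.card ι : ℝ) ^ 2 / 4 := by
    have hsum : (posReCount v u : ℝ) + posReCount v (-u) ≤ Fintype.card ι := by
      exact_mod_cast posReCount_add_posReCount_neg_le v u
    nlinarith [sq_nonneg ((posReCount v u : ℝ) - posReCount v (-u))]
  have hnn := posReSum_nonneg v
  calc Complex.normSq μ ^ 2 * (posReSum v u * posReSum v (-u))
      = (Complex.normSq μ * posReSum v u) * (Complex.normSq μ * posReSum v (-u)) := by ring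
    _ ≤ (posReCount v u * posReSum v (u * conj μ)) *
          (posReCount v (-u) * posReSum v (-(u * conj μ))) := by
        gcongr ?_ * ?_
        · exact mul_nonneg (Complex.normSq_nonneg _) (hnn _)
        · exact mul_nonneg (Nat.cast_nonneg _) (hnn _)
    _ = (posReCount v u * posReCount v (-u) : ℝ) *
          (posReSum v (u * conj μ) * posReSum v (-(u * conj μ))) := by ring
    _ ≤ _ := by gcongr; exact mul_nonneg (hnn _) (hnn _)

end PosRe

theorem modulus_le_half_n (n : ℕ) (A : Matrix (Fin n) (Fin n) ℝ)
    (hA : ∀ i j, 0 ≤ A i j ∧ A i j ≤ 1)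
    (μ : ℂ) (hμ : μ ∈ ((A.map Complex.ofReal).charpoly).roots) (him : μ.im ≠ 0) :
    ‖μ‖ ≤ n / 2 := by
  obtain ⟨v, hv0, hv⟩ := exists_mulVec_eq_smul_of_mem_roots_charpoly hμ
  set G : ℂ → ℝ := fun u => posReSum v u * posReSum v (-u)
  have hGpos : ∃ u, 0 < G u := by
    obtain ⟨j, k, hjk⟩ := exists_im_conj_mul_ne_zero hv hv0 him
    obtain ⟨u, hk, hj⟩ := exists_re_mul_pos_re_mul_neg hjk
    refine ⟨u, mul_pos (hk.trans_le (re_le_posReSum v u k)) ?_⟩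
    refine lt_of_lt_of_le ?_ (re_le_posReSum v (-u) j)
    simpa [neg_mul] using hj
  have hGhom (r : ℝ) (hr : 0 ≤ r) (u : ℂ) : G (r • u) = r ^ 2 * G u := by
    simp only [G, ← smul_neg, posReSum_smul v hr]
    ring
  have hGcont : Continuous G :=
    (continuous_posReSum v).mul ((continuous_posReSum v).comp continuous_neg)
  have hbound := le_mul_norm_sq_of_forall_mul_le_mul hGcont hGhom hGpos (by positivity)
    (normSq_sq_mul_posReSum_mul_le hv hA)
  rw [Complex.normSq_eq_norm_sq, Complex.norm_conj, Fintype.card_fin] at hbound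
  have hμ0 : 0 < ‖μ‖ := norm_pos_iff.mpr (by rintro rfl; simp at him)
  have hsq : ‖μ‖ ^ 2 ≤ (n / 2 : ℝ) ^ 2 := by nlinarith
  exact (pow_le_pow_iff_left₀ (norm_nonneg μ) (by positivity) two_ne_zero).mp hsq
end

section
/- For x ∈ [0,1], the maximum of min{(1 + 3x − 4x²)/8, x²} equals ((3 + √57)/24)², achieved at x = (3 + √57)/24. -/
theorem max_min_sqrt57 :
    IsGreatest ((fun x : ℝ => min ((1 + 3 * x - 4 * x ^ 2) / 8) (x ^ 2)) '' Set.Icc 0 1)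
      (((3 + Real.sqrt 57) / 24) ^ 2) ∧
    min ((1 + 3 * ((3 + Real.sqrt 57) / 24) - 4 * ((3 + Real.sqrt 57) / 24) ^ 2) / 8)
        (((3 + Real.sqrt 57) / 24) ^ 2) = ((3 + Real.sqrt 57) / 24) ^ 2 := by
  have h57 : Real.sqrt 57 ^ 2 = 57 := Real.sq_sqrt (by norm_num)
  have hnn : (0:ℝ) ≤ Real.sqrt 57 := Real.sqrt_nonneg 57
  have h7 : (7:ℝ) < Real.sqrt 57 := by nlinarith
  have h8 : Real.sqrt 57 < 8 := by nlinarith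
  set a : ℝ := (3 + Real.sqrt 57) / 24 with ha
  have heq : (1 + 3 * a - 4 * a ^ 2) / 8 = a ^ 2 := by
    rw [ha]; field_simp; nlinarith
  have hmem : a ∈ Set.Icc (0:ℝ) 1 := by
    constructor <;> rw [ha] <;> nlinarith
  refine ⟨⟨⟨a, hmem, by simp [heq]⟩, ?_⟩, by simp [heq]⟩
  rintro y ⟨x, hx, rfl⟩
  simp only
  rcases le_total x a with h | h
  · exact le_trans (min_le_right _ _) (by nlinarith [hx.1])
  · refine le_trans (min_le_left _ _) ?_
    have ha38 : (3:ℝ)/8 < a := by rw [ha]; nlinarith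
    nlinarith [hx.2, heq]
end

section
/- Let A be an n×n non-negative matrix with all entries at most 1. Then the real part of every complex eigenvalue of A is at least −n/2. -/
open Matrix Polynomial

/-!
If `A v = μ v` with `v = x + i y ≠ 0`, then `μ.re * ‖v‖² = Re (v* A v) = xᵀ A x + yᵀ A y`, so it
suffices to bound the real quadratic form: `xᵀ A x ≥ -(n / 2) ‖x‖²`. Split `x = p - m` into its
positive and negative parts. Since `0 ≤ A ≤ 1`, every term `Aᵢⱼ xᵢ xⱼ` is at least
`-(pᵢ mⱼ + mᵢ pⱼ)`, hence `xᵀ A x ≥ -2 P Q ≥ -(P + Q)² / 2` with `P = ∑ pᵢ`, `Q = ∑ mᵢ`; and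
`(P + Q)² = (∑ |xᵢ|)² ≤ n ‖x‖²` by Cauchy–Schwarz.
-/

theorem neg_posPart_mul_negPart_add_le_mul {a : ℝ} (ha₀ : 0 ≤ a) (ha₁ : a ≤ 1) (s t : ℝ) :
    -(s⁺ * t⁻ + s⁻ * t⁺) ≤ a * (s * t) := by
  conv_rhs => rw [← posPart_sub_negPart s, ← posPart_sub_negPart t]
  nlinarith [mul_nonneg ha₀ (add_nonneg (mul_nonneg (posPart_nonneg s) (posPart_nonneg t))
      (mul_nonneg (negPart_nonneg s) (negPart_nonneg t))),
    mul_nonneg (sub_nonneg.2 ha₁) (add_nonneg (mul_nonneg (posPart_nonneg s) (negPart_nonneg t))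
      (mul_nonneg (negPart_nonneg s) (posPart_nonneg t)))]

namespace Matrix

variable {ι : Type*} [Fintype ι]

theorem exists_mulVec_eq_smul_of_mem_roots_charpoly_s9 [DecidableEq ι] {R : Type*} [CommRing R]
    [IsDomain R] {B : Matrix ι ι R} {μ : R} (hμ : μ ∈ B.charpoly.roots) :
    ∃ v ≠ 0, B *ᵥ v = μ • v := by
  have : Module.End.HasEigenvalue (toLin' B) μ := by
    rw [Module.End.hasEigenvalue_iff_isRoot_charpoly, charpoly_toLin']
    exact (mem_roots'.mp hμ).2
  obtain ⟨v, hv⟩ := this.exists_hasEigenvector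
  exact ⟨v, hv.2, by simpa using hv.apply_eq_smul⟩

theorem neg_two_mul_sum_posPart_mul_sum_negPart_le_dotProduct_mulVec {A : Matrix ι ι ℝ}
    (hA : ∀ i j, 0 ≤ A i j ∧ A i j ≤ 1) (x : ι → ℝ) :
    -(2 * (∑ i, (x i)⁺) * ∑ i, (x i)⁻) ≤ x ⬝ᵥ A *ᵥ x := by
  calc -(2 * (∑ i, (x i)⁺) * ∑ i, (x i)⁻)
      = ∑ i, ∑ j, -((x i)⁺ * (x j)⁻ + (x i)⁻ * (x j)⁺) := by
        simp only [neg_add, Finset.sum_add_distrib, Finset.sum_neg_distrib, ← Finset.sum_mul_sum]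
        ring
    _ ≤ ∑ i, ∑ j, A i j * (x i * x j) := by
        gcongr with i _ j _
        exact neg_posPart_mul_negPart_add_le_mul (hA i j).1 (hA i j).2 _ _
    _ = x ⬝ᵥ A *ᵥ x := by
        simp only [dotProduct, mulVec, Finset.mul_sum]
        exact Finset.sum_congr rfl fun i _ => Finset.sum_congr rfl fun j _ => by ring

theorem sq_sum_abs_le_card_mul_dotProduct_self (x : ι → ℝ) :
    (∑ i, |x i|) ^ 2 ≤ Fintype.card ι * (x ⬝ᵥ x) := by
  simpa [dotProduct, sq_abs, sq] using
    sq_sum_le_card_mul_sum_sq (s := Finset.univ) (f := fun i => |x i|)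

theorem neg_card_div_two_mul_le_dotProduct_mulVec {A : Matrix ι ι ℝ}
    (hA : ∀ i j, 0 ≤ A i j ∧ A i j ≤ 1) (x : ι → ℝ) :
    -(Fintype.card ι / 2 : ℝ) * (x ⬝ᵥ x) ≤ x ⬝ᵥ A *ᵥ x := by
  have hP : 0 ≤ ∑ i, (x i)⁺ := Finset.sum_nonneg fun i _ => posPart_nonneg _
  have hQ : 0 ≤ ∑ i, (x i)⁻ := Finset.sum_nonneg fun i _ => negPart_nonneg _
  have hCS := sq_sum_abs_le_card_mul_dotProduct_self x
  rw [show ∑ i, |x i| = ∑ i, (x i)⁺ + ∑ i, (x i)⁻ by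
    simp only [← Finset.sum_add_distrib, posPart_add_negPart]] at hCS
  nlinarith [neg_two_mul_sum_posPart_mul_sum_negPart_le_dotProduct_mulVec hA x,
    sq_nonneg (∑ i, (x i)⁺ - ∑ i, (x i)⁻)]

theorem re_star_dotProduct_map_ofReal_mulVec (A : Matrix ι ι ℝ) (v : ι → ℂ) :
    (star v ⬝ᵥ A.map Complex.ofReal *ᵥ v).re =
      (Complex.re ∘ v) ⬝ᵥ A *ᵥ (Complex.re ∘ v) + (Complex.im ∘ v) ⬝ᵥ A *ᵥ (Complex.im ∘ v) := by
  simp only [dotProduct, mulVec, Finset.mul_sum, Complex.re_sum, ← Finset.sum_add_distrib]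
  refine Finset.sum_congr rfl fun i _ => Finset.sum_congr rfl fun j _ => ?_
  simp [Complex.mul_re, Complex.mul_im]

open scoped ComplexOrder in
theorem le_re_of_map_ofReal_mulVec_eq_smul {A : Matrix ι ι ℝ} {c : ℝ}
    (hA : ∀ x, c * (x ⬝ᵥ x) ≤ x ⬝ᵥ A *ᵥ x) {μ : ℂ} {v : ι → ℂ} (hv : v ≠ 0)
    (hμ : A.map Complex.ofReal *ᵥ v = μ • v) : c ≤ μ.re := by
  classical
  obtain ⟨hpos, him⟩ : 0 < (star v ⬝ᵥ v).re ∧ 0 = (star v ⬝ᵥ v).im :=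
    Complex.pos_iff.1 (dotProduct_star_self_pos_iff.2 hv)
  have hnorm := re_star_dotProduct_map_ofReal_mulVec 1 v
  rw [Matrix.map_one _ Complex.ofReal_zero Complex.ofReal_one, one_mulVec, one_mulVec,
    one_mulVec] at hnorm
  have hquad := re_star_dotProduct_map_ofReal_mulVec A v
  rw [hμ, dotProduct_smul, smul_eq_mul, Complex.mul_re, ← him, mul_zero, sub_zero] at hquad
  refine le_of_mul_le_mul_right ?_ hpos
  rw [hquad, hnorm, mul_add]
  exact add_le_add (hA _) (hA _)

end Matrix

theorem re_lower_bound (n : ℕ) (A : Matrix (Fin n) (Fin n) ℝ)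
    (hA : ∀ i j, 0 ≤ A i j ∧ A i j ≤ 1)
    (μ : ℂ) (hμ : μ ∈ ((A.map Complex.ofReal).charpoly).roots) :
    -(n / 2 : ℝ) ≤ μ.re := by
  obtain ⟨v, hv, hvμ⟩ := exists_mulVec_eq_smul_of_mem_roots_charpoly_s9 hμ
  simpa using le_re_of_map_ofReal_mulVec_eq_smul
    (neg_card_div_two_mul_le_dotProduct_mulVec hA) hv hvμ
end

section
/- Let A be an n×n non-negative matrix with spectral radius λmax, and define Â by Â_{ij} = min{A_{ij}, A_{ji}}. Then the sum of all entries of Â is at most n·λmax. -/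
/-!
`Â` is a symmetric non-negative minorant of `A`. For symmetric `P`, Cauchy–Schwarz gives
`(𝟙ᵀ P 𝟙)² ≤ n · 𝟙ᵀ P² 𝟙`, so the mean `s = 𝟙ᵀ Â 𝟙 / n` satisfies
`s ^ 2 ^ k ≤ 𝟙ᵀ Â ^ 2 ^ k 𝟙 / n ≤ 𝟙ᵀ A ^ 2 ^ k 𝟙 / n ≤ ‖A ^ 2 ^ k‖` (operator `ℓ²`-norm).
Gelfand's formula along the subsequence `2 ^ k` then gives `s ≤ ρ(A) ≤ λmax`.
-/

open Matrix Polynomial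

open Filter
open scoped Matrix.Norms.L2Operator

namespace Matrix

variable {ι : Type*} [Fintype ι]

theorem sq_sum_entries_le_card_mul_sum_entries_transpose_mul_self (C : Matrix ι ι ℝ) :
    (∑ i, ∑ j, C i j) ^ 2 ≤ Fintype.card ι * ∑ i, ∑ j, (Cᵀ * C) i j := by
  have hrows : ∑ i, ∑ j, (Cᵀ * C) i j = ∑ l, (∑ j, C l j) ^ 2 := by
    simp only [mul_apply, transpose_apply, sq, Finset.sum_mul_sum]
    exact Finset.sum_comm_cycle
  rw [hrows]
  exact sq_sum_le_card_mul_sum_sq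

theorem sum_entries_div_card_pow_two_pow_le [DecidableEq ι] {B : Matrix ι ι ℝ}
    (hB : ∀ i j, 0 ≤ B i j) (hBsym : Bᵀ = B) (k : ℕ) :
    ((∑ i, ∑ j, B i j) / Fintype.card ι) ^ 2 ^ k ≤
      (∑ i, ∑ j, (B ^ 2 ^ k) i j) / Fintype.card ι := by
  induction k with
  | zero => simp
  | succ k ih =>
    set P := B ^ 2 ^ k
    have hP : Pᵀ * P = B ^ 2 ^ (k + 1) := by
      rw [transpose_pow, hBsym, ← pow_add, ← two_mul, pow_succ']
    have hS : 0 ≤ (∑ i, ∑ j, B i j) / Fintype.card ι :=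
      div_nonneg (Finset.sum_nonneg fun i _ => Finset.sum_nonneg fun j _ => hB i j)
        (Nat.cast_nonneg _)
    calc ((∑ i, ∑ j, B i j) / Fintype.card ι) ^ 2 ^ (k + 1)
        = (((∑ i, ∑ j, B i j) / Fintype.card ι) ^ 2 ^ k) ^ 2 := by rw [pow_succ, pow_mul]
      _ ≤ ((∑ i, ∑ j, P i j) / Fintype.card ι) ^ 2 := by gcongr
      _ ≤ (∑ i, ∑ j, (B ^ 2 ^ (k + 1)) i j) / Fintype.card ι := by
        rw [div_pow, ← hP]
        rcases (Fintype.card ι).eq_zero_or_pos with hι | hι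
        · simp [hι]
        · rw [div_le_div_iff₀ (by positivity) (by positivity)]
          nlinarith [sq_sum_entries_le_card_mul_sum_entries_transpose_mul_self P]

theorem pow_apply_le_pow_apply_of_le {R : Type*} [Semiring R] [PartialOrder R] [IsOrderedRing R]
    [DecidableEq ι] {A B : Matrix ι ι R} (hB : ∀ i j, 0 ≤ B i j) (hBA : ∀ i j, B i j ≤ A i j)
    (k : ℕ) (i j : ι) : (B ^ k) i j ≤ (A ^ k) i j := by
  induction k generalizing j with
  | zero => rfl
  | succ k ih =>
    rw [pow_succ, pow_succ, mul_apply, mul_apply]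
    exact Finset.sum_le_sum fun l _ => mul_le_mul (ih l) (hBA l j) (hB l j)
      (pow_apply_nonneg (fun i j => (hB i j).trans (hBA i j)) k i l)

theorem norm_sum_entries_le_card_mul_l2_opNorm {𝕜 : Type*} [RCLike 𝕜] [DecidableEq ι]
    (M : Matrix ι ι 𝕜) : ‖∑ i, ∑ j, M i j‖ ≤ Fintype.card ι * ‖M‖ := by
  set x : EuclideanSpace 𝕜 ι := WithLp.toLp 2 fun _ => 1
  have hinner : inner 𝕜 x (toEuclideanCLM (𝕜 := 𝕜) M x) = ∑ i, ∑ j, M i j := by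
    simp [x, PiLp.inner_apply, mulVec, dotProduct]
  have hx : ‖x‖ ^ 2 = Fintype.card ι := by
    rw [EuclideanSpace.norm_eq, Real.sq_sqrt (by positivity)]
    simp [x]
  calc ‖∑ i, ∑ j, M i j‖ ≤ ‖x‖ * ‖toEuclideanCLM (𝕜 := 𝕜) M x‖ :=
        hinner ▸ norm_inner_le_norm _ _
    _ ≤ ‖x‖ * (‖M‖ * ‖x‖) := by gcongr; exact (toEuclideanCLM (𝕜 := 𝕜) M).le_opNorm x
    _ = Fintype.card ι * ‖M‖ := by rw [← hx]; ring

theorem sum_entries_le_card_mul_l2_opNorm_map_ofReal [DecidableEq ι] (M : Matrix ι ι ℝ) :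
    ∑ i, ∑ j, M i j ≤ Fintype.card ι * ‖M.map Complex.ofReal‖ := by
  have := norm_sum_entries_le_card_mul_l2_opNorm (M.map Complex.ofReal)
  simp only [map_apply, ← Complex.ofReal_sum, Complex.norm_real, Real.norm_eq_abs] at this
  exact (le_abs_self _).trans this

theorem spectralRadius_le_of_forall_mem_roots_charpoly [DecidableEq ι] (M : Matrix ι ι ℂ) {r : ℝ}
    (h : ∀ z ∈ M.charpoly.roots, ‖z‖ ≤ r) : spectralRadius ℂ M ≤ ENNReal.ofReal r := by
  refine iSup₂_le fun z hz => ?_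
  rw [← enorm_eq_nnnorm, ← ofReal_norm]
  exact ENNReal.ofReal_le_ofReal <| h z <|
    (mem_roots M.charpoly_monic.ne_zero).2 (mem_spectrum_iff_isRoot_charpoly.1 hz)

end Matrix

theorem spectrum.ofReal_le_spectralRadius_of_le_norm_pow {A : Type*} [NormedRing A]
    [NormedAlgebra ℂ A] [CompleteSpace A] (a : A) {c : ℝ} {u : ℕ → ℕ} (hu : Tendsto u atTop atTop)
    (h : ∀ j, c ^ u j ≤ ‖a ^ u j‖) : ENNReal.ofReal c ≤ spectralRadius ℂ a := by
  rcases le_or_gt c 0 with hc | hc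
  · simp [ENNReal.ofReal_of_nonpos hc]
  refine ge_of_tendsto ((spectrum.pow_norm_pow_one_div_tendsto_nhds_spectralRadius a).comp hu) ?_
  filter_upwards [hu.eventually_ne_atTop 0] with j hj
  refine ENNReal.ofReal_le_ofReal ?_
  calc c = (c ^ u j) ^ (1 / (u j : ℝ)) := by rw [one_div, Real.pow_rpow_inv_natCast hc.le hj]
    _ ≤ ‖a ^ u j‖ ^ (1 / (u j : ℝ)) := by gcongr; exact h j

theorem hatA_sum_bound (n : ℕ) (A : Matrix (Fin n) (Fin n) ℝ)
    (hA : ∀ i j, 0 ≤ A i j)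
    (lmax : ℝ)
    (hl : ((lmax : ℂ)) ∈ ((A.map Complex.ofReal).charpoly).roots)
    (hlmax : ∀ z ∈ ((A.map Complex.ofReal).charpoly).roots, ‖z‖ ≤ lmax) :
    ∑ i, ∑ j, min (A i j) (A j i) ≤ n * lmax := by
  rcases n.eq_zero_or_pos with rfl | hn
  · simp
  have hlmax_nonneg : 0 ≤ lmax := (abs_nonneg lmax).trans (by simpa using hlmax _ hl)
  set B : Matrix (Fin n) (Fin n) ℝ := of fun i j => min (A i j) (A j i)
  have hB : ∀ i j, 0 ≤ B i j := fun i j => le_min (hA i j) (hA j i)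
  have hBA : ∀ i j, B i j ≤ A i j := fun i j => min_le_left _ _
  have hBsym : Bᵀ = B := by ext i j; exact min_comm _ _
  have hpow (k : ℕ) : ((∑ i, ∑ j, B i j) / n) ^ 2 ^ k ≤ ‖A.map Complex.ofReal ^ 2 ^ k‖ := calc
    _ ≤ (∑ i, ∑ j, (B ^ 2 ^ k) i j) / n := by
      simpa using sum_entries_div_card_pow_two_pow_le hB hBsym k
    _ ≤ (∑ i, ∑ j, (A ^ 2 ^ k) i j) / n := by
      gcongr with i _ j _
      exact pow_apply_le_pow_apply_of_le hB hBA _ i j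
    _ ≤ ‖A.map Complex.ofReal ^ 2 ^ k‖ := by
      have hmap : A.map Complex.ofReal ^ 2 ^ k = (A ^ 2 ^ k).map Complex.ofReal :=
        (A.map_pow Complex.ofRealHom _).symm
      rw [div_le_iff₀ (by positivity), mul_comm, hmap]
      have h := sum_entries_le_card_mul_l2_opNorm_map_ofReal (A ^ 2 ^ k)
      rw [Fintype.card_fin] at h
      exact h
  have hρ := (spectrum.ofReal_le_spectralRadius_of_le_norm_pow _
    (tendsto_pow_atTop_atTop_of_one_lt one_lt_two) hpow).trans
    (spectralRadius_le_of_forall_mem_roots_charpoly _ hlmax)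
  rwa [ENNReal.ofReal_le_ofReal_iff hlmax_nonneg, div_le_iff₀ (by positivity), mul_comm] at hρ
end

section
/- Let A be an n×n non-negative matrix with all entries at most 1 and spectral radius λmax. Then the squared Frobenius norm of A satisfies ‖A‖_F² ≤ (n² + n·λmax)/2. -/
/-!
Pairing the entries `(i, j)` and `(j, i)`, the inequality `a² + b² ≤ 1 + a b` on `[0, 1]` gives
`2 ‖A‖_F² ≤ n² + 1ᵀ S 1` for `S = A ⊙ Aᵀ`, which is symmetric with `0 ≤ S ≤ A` entrywise.
For symmetric `S`, Cauchy–Schwarz gives `(1ᵀ S^m 1)² ≤ n · 1ᵀ S^(2m) 1`, so with `t = 1ᵀ S 1 / n`,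
`n t^(2^k) ≤ 1ᵀ S^(2^k) 1 ≤ 1ᵀ A^(2^k) 1 ≤ n ‖A^(2^k)‖∞`,
and Gelfand's formula turns this into `t ≤ ρ(A) ≤ λmax`.
-/

open Matrix Filter
open scoped ENNReal

-- Gelfand's formula needs a Banach algebra norm on matrices; the `ℓ∞` operator norm bounds the
-- sum of all entries by `n ‖M‖`.
attribute [local instance] Matrix.linftyOpSeminormedAddCommGroup Matrix.linftyOpNormedRing
  Matrix.linftyOpNormedAlgebra

lemma spectrum.ofReal_le_spectralRadius_of_frequently_pow_le_norm_pow {A : Type*} [NormedRing A]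
    [NormedAlgebra ℂ A] [CompleteSpace A] {a : A} {t : ℝ} (h : ∃ᶠ m in atTop, t ^ m ≤ ‖a ^ m‖) :
    ENNReal.ofReal t ≤ spectralRadius ℂ a := by
  refine le_trans ?_ (spectrum.limsup_pow_nnnorm_pow_one_div_le_spectralRadius a)
  refine le_limsup_of_frequently_le' ((h.and_eventually (eventually_ne_atTop 0)).mono ?_)
  rintro m ⟨hm, hm0⟩
  rcases le_total t 0 with ht | ht
  · simp [ENNReal.ofReal_of_nonpos ht]
  calc ENNReal.ofReal t = (ENNReal.ofReal t ^ m) ^ (1 / m : ℝ) := by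
        rw [one_div, ENNReal.pow_rpow_inv_natCast hm0]
    _ ≤ (‖a ^ m‖₊ : ℝ≥0∞) ^ (1 / m : ℝ) := by
        gcongr
        rw [← ENNReal.ofReal_pow ht]
        exact ENNReal.ofReal_le_of_le_toReal (by simpa using hm)

namespace Matrix

variable {ι : Type*}

lemma isSymm_hadamard_transpose {α : Type*} [CommMagma α] (M : Matrix ι ι α) :
    (M ⊙ Mᵀ).IsSymm := by
  rw [IsSymm, transpose_hadamard, transpose_transpose, hadamard_comm]

variable [Fintype ι]

lemma pow_apply_le_pow_apply {R : Type*} [Semiring R] [PartialOrder R] [IsOrderedRing R]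
    [DecidableEq ι] {M N : Matrix ι ι R} (hM : ∀ i j, 0 ≤ M i j) (hMN : ∀ i j, M i j ≤ N i j)
    (k : ℕ) (i j : ι) : (M ^ k) i j ≤ (N ^ k) i j := by
  induction k generalizing j with
  | zero => rfl
  | succ k ih =>
    simp only [pow_succ, mul_apply]
    gcongr with l
    · exact hM l j
    · exact pow_apply_nonneg (fun a b => (hM a b).trans (hMN a b)) k i l
    · exact ih l
    · exact hMN l j

section LinearOrderedRing

variable {R : Type*} [CommRing R] [LinearOrder R] [IsStrictOrderedRing R]

lemma two_mul_sum_sq_apply_le {M : Matrix ι ι R} (hM : ∀ i j, 0 ≤ M i j ∧ M i j ≤ 1) :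
    2 * ∑ i, ∑ j, M i j ^ 2 ≤ Fintype.card ι ^ 2 + ∑ i, ∑ j, (M ⊙ Mᵀ) i j := by
  have hswap : ∑ i, ∑ j, M j i ^ 2 = ∑ i, ∑ j, M i j ^ 2 := Finset.sum_comm
  calc 2 * ∑ i, ∑ j, M i j ^ 2 = ∑ i, ∑ j, (M i j ^ 2 + M j i ^ 2) := by
        simp only [Finset.sum_add_distrib, hswap]
        ring
    _ ≤ ∑ i, ∑ j, (1 + M i j * M j i) := by
        refine Finset.sum_le_sum fun i _ => Finset.sum_le_sum fun j _ => ?_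
        obtain ⟨ha0, ha1⟩ := hM i j
        obtain ⟨hb0, hb1⟩ := hM j i
        nlinarith [mul_nonneg ha0 (sub_nonneg.2 ha1), mul_nonneg hb0 (sub_nonneg.2 hb1),
          mul_nonneg (sub_nonneg.2 ha1) (sub_nonneg.2 hb1)]
    _ = Fintype.card ι ^ 2 + ∑ i, ∑ j, (M ⊙ Mᵀ) i j := by
        simp [Finset.sum_add_distrib, sq]

lemma sq_sum_apply_le_card_mul_sum_mul_self_apply {S : Matrix ι ι R} (hS : S.IsSymm) :
    (∑ i, ∑ j, S i j) ^ 2 ≤ Fintype.card ι * ∑ i, ∑ j, (S * S) i j := by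
  have hrow : ∑ i, ∑ j, (S * S) i j = ∑ k, (∑ j, S k j) ^ 2 :=
    calc ∑ i, ∑ j, (S * S) i j = ∑ i, ∑ k, ∑ j, S i k * S k j := by
          simp only [mul_apply]
          exact Finset.sum_congr rfl fun _ _ => Finset.sum_comm
      _ = ∑ k, ∑ i, ∑ j, S k i * S k j := by
          rw [Finset.sum_comm]
          exact Finset.sum_congr rfl fun k _ => Finset.sum_congr rfl fun i _ => by
            rw [hS.apply k i]
      _ = ∑ k, (∑ j, S k j) ^ 2 := by simp only [sq, Finset.sum_mul_sum]
  simpa [hrow] using sq_sum_le_card_mul_sum_sq (s := Finset.univ) (f := fun k => ∑ j, S k j)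

lemma card_mul_pow_two_pow_le_sum_pow_two_pow_apply [DecidableEq ι] [Nonempty ι]
    {S : Matrix ι ι R} (hS : S.IsSymm) {t : R} (ht : 0 ≤ t)
    (h : Fintype.card ι * t ≤ ∑ i, ∑ j, S i j) (k : ℕ) :
    Fintype.card ι * t ^ 2 ^ k ≤ ∑ i, ∑ j, (S ^ 2 ^ k) i j := by
  have hn : (0 : R) < Fintype.card ι := by exact_mod_cast Fintype.card_pos
  induction k with
  | zero => simpa using h
  | succ k ih =>
    have hsq : S ^ 2 ^ (k + 1) = S ^ 2 ^ k * S ^ 2 ^ k := by rw [pow_succ, pow_mul, sq]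
    refine le_of_mul_le_mul_left ?_ hn
    calc Fintype.card ι * (Fintype.card ι * t ^ 2 ^ (k + 1))
        = (Fintype.card ι * t ^ 2 ^ k) ^ 2 := by ring
      _ ≤ (∑ i, ∑ j, (S ^ 2 ^ k) i j) ^ 2 := by gcongr
      _ ≤ Fintype.card ι * ∑ i, ∑ j, (S ^ 2 ^ (k + 1)) i j := by
        rw [hsq]
        exact sq_sum_apply_le_card_mul_sum_mul_self_apply (hS.pow _)

end LinearOrderedRing

lemma sum_norm_apply_le_card_mul_norm {α : Type*} [SeminormedAddCommGroup α]
    (C : Matrix ι ι α) :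
    ∑ i, ∑ j, ‖C i j‖ ≤ Fintype.card ι * ‖C‖ := by
  have h := Finset.sum_le_card_nsmul Finset.univ (fun i => ∑ j, ‖C i j‖₊) _
    fun i hi => Finset.le_sup (f := fun i => ∑ j, ‖C i j‖₊) hi
  rw [nsmul_eq_mul, Finset.card_univ] at h
  rw [linfty_opNorm_def]
  have h' := NNReal.coe_le_coe.mpr h
  push_cast at h'
  exact h'

lemma sum_apply_le_card_mul_norm_map_ofReal (M : Matrix ι ι ℝ) :
    ∑ i, ∑ j, M i j ≤ Fintype.card ι * ‖M.map ((↑) : ℝ → ℂ)‖ := by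
  refine le_trans ?_ (sum_norm_apply_le_card_mul_norm _)
  gcongr with i _ j _
  simpa using le_abs_self (M i j)

lemma spectralRadius_le_ofReal_of_forall_mem_roots_charpoly {𝕜 : Type*} [NormedField 𝕜]
    [DecidableEq ι] (B : Matrix ι ι 𝕜) {r : ℝ} (h : ∀ z ∈ B.charpoly.roots, ‖z‖ ≤ r) :
    spectralRadius 𝕜 B ≤ ENNReal.ofReal r := by
  refine iSup₂_le fun z hz => ?_
  rw [← ENNReal.ofReal_coe_nnreal, coe_nnnorm]
  refine ENNReal.ofReal_le_ofReal (h z ?_)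
  rw [Polynomial.mem_roots B.charpoly_monic.ne_zero, ← mem_spectrum_iff_isRoot_charpoly]
  exact hz

lemma sum_apply_le_card_mul_spectralRadius [DecidableEq ι] {S A : Matrix ι ι ℝ} (hS : S.IsSymm)
    (hS0 : ∀ i j, 0 ≤ S i j) (hSA : ∀ i j, S i j ≤ A i j) :
    ∑ i, ∑ j, S i j ≤ Fintype.card ι * (spectralRadius ℂ (A.map ((↑) : ℝ → ℂ))).toReal := by
  rcases isEmpty_or_nonempty ι with hι | hι
  · simp
  have hn : (0 : ℝ) < Fintype.card ι := by exact_mod_cast Fintype.card_pos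
  set t := (∑ i, ∑ j, S i j) / Fintype.card ι with ht_def
  have hSt : ∑ i, ∑ j, S i j = Fintype.card ι * t := by rw [ht_def, mul_div_cancel₀ _ hn.ne']
  have ht : 0 ≤ t :=
    div_nonneg (Finset.sum_nonneg fun i _ => Finset.sum_nonneg fun j _ => hS0 i j) hn.le
  have hpow (k : ℕ) : t ^ 2 ^ k ≤ ‖A.map ((↑) : ℝ → ℂ) ^ 2 ^ k‖ := by
    refine le_of_mul_le_mul_left ?_ hn
    calc Fintype.card ι * t ^ 2 ^ k ≤ ∑ i, ∑ j, (S ^ 2 ^ k) i j :=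
          card_mul_pow_two_pow_le_sum_pow_two_pow_apply hS ht hSt.ge k
      _ ≤ ∑ i, ∑ j, (A ^ 2 ^ k) i j := by
          gcongr with i _ j _
          exact pow_apply_le_pow_apply hS0 hSA _ i j
      _ ≤ Fintype.card ι * ‖(A ^ 2 ^ k).map ((↑) : ℝ → ℂ)‖ :=
          sum_apply_le_card_mul_norm_map_ofReal _
      _ = Fintype.card ι * ‖A.map ((↑) : ℝ → ℂ) ^ 2 ^ k‖ := by
          rw [show (A ^ 2 ^ k).map ((↑) : ℝ → ℂ) = A.map (↑) ^ 2 ^ k from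
            A.map_pow Complex.ofRealHom _]
  have hρ := spectrum.ofReal_le_spectralRadius_of_frequently_pow_le_norm_pow
    ((tendsto_pow_atTop_atTop_of_one_lt one_lt_two).frequently (Frequently.of_forall hpow))
  rw [ENNReal.ofReal_le_iff_le_toReal
    (ne_top_of_le_ne_top ENNReal.coe_ne_top (spectrum.spectralRadius_le_nnnorm _))] at hρ
  rw [hSt]
  gcongr

end Matrix

theorem frobenius_bound (n : ℕ) (A : Matrix (Fin n) (Fin n) ℝ)
    (hA : ∀ i j, 0 ≤ A i j ∧ A i j ≤ 1)
    (lmax : ℝ)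
    (hl : ((lmax : ℂ)) ∈ ((A.map Complex.ofReal).charpoly).roots)
    (hlmax : ∀ z ∈ ((A.map Complex.ofReal).charpoly).roots, ‖z‖ ≤ lmax) :
    ∑ i, ∑ j, A i j ^ 2 ≤ (n ^ 2 + n * lmax) / 2 := by
  have hρ : (spectralRadius ℂ (A.map Complex.ofReal)).toReal ≤ lmax :=
    ENNReal.toReal_le_of_le_ofReal ((norm_nonneg _).trans (hlmax _ hl))
      (spectralRadius_le_ofReal_of_forall_mem_roots_charpoly _ hlmax)
  have hsymm := sum_apply_le_card_mul_spectralRadius (isSymm_hadamard_transpose A)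
    (fun i j => mul_nonneg (hA i j).1 (hA j i).1)
    (fun i j => mul_le_of_le_one_right (hA i j).1 (hA j i).2)
  have hsq := two_mul_sum_sq_apply_le hA
  rw [Fintype.card_fin] at hsymm hsq
  have hnρ : (n : ℝ) * (spectralRadius ℂ (A.map Complex.ofReal)).toReal ≤ n * lmax := by gcongr
  linarith
end
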